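/- arXiv:2408.04792 — 2 statements merged into one kernel-verified Lean document; each statement's English description precedes it below -/
import Mathlib

section
/- (Soundness of the infinitary rule.) Let φ, α, β be formulas of a countable predicate language L. If β ⊨ denotes semantic consequence over continuous t-norms, then { φ ∨ (α → βⁿ) : n ∈ ℕ } ⊨ φ ∨ (α → (α & β)), i.e., every safe structure based on a continuous t-norm that is a model of all the formulas φ ∨ (α → βⁿ) (n ∈ ℕ) is a model of φ ∨ (α → (α & β)). -/
/-! Over a continuous t-norm `φ ∨ ψ` is interpreted by the maximum, so at a valuation where `φ`
is not true the premises give `α ≤ βⁿ` for every `n`. The infimum `c` of the powers `βⁿ` is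
idempotent, by continuity of the t-norm, and `α ≤ c ≤ β`; by divisibility of continuous t-norms
`α = c · d` for some `d`, whence `α · β ≥ α · c = c · c · d = α`, i.e. `α → α & β` is true. -/

/-- The fact `(0 : ℝ) ≤ 1`, enabling the complete lattice structure on `unitInterval`. -/
instance : Fact ((0:ℝ) ≤ 1) := ⟨zero_le_one⟩

/-- A continuous t-norm: a commutative, associative, monotone binary operation on the
real unit interval `[0,1]` with unit `1`, continuous w.r.t. the usual topology. -/
structure ContinuousTNorm where
  mul : unitInterval → unitInterval → unitInterval
  mul_comm : ∀ x y, mul x y = mul y x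
  mul_assoc : ∀ x y z, mul (mul x y) z = mul x (mul y z)
  mul_mono : ∀ x y z, y ≤ z → mul x y ≤ mul x z
  mul_one : ∀ x, mul x 1 = x
  continuous : Continuous fun p : unitInterval × unitInterval => mul p.1 p.2

/-- `B.pow b n` is the `n`-fold `·`-power of `b`, with `b⁰ = 1`. -/
def ContinuousTNorm.pow (B : ContinuousTNorm) (b : unitInterval) : ℕ → unitInterval
  | 0 => 1
  | n + 1 => B.mul b (B.pow b n)

/-! ## Syntax of a countable predicate language and the logic `⊢` -/

/-- A countable predicate language: countably many constant symbols and
predicate symbols with arities. (Variables are indexed by `ℕ`.) -/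
structure PredLanguage where
  Const : Type
  Pred : Type
  arity : Pred → ℕ
  const_countable : Countable Const
  pred_countable : Countable Pred

variable {L : PredLanguage}

/-- Terms: variables (indexed by `ℕ`) and constants. -/
inductive Term (L : PredLanguage) : Type
  | var : ℕ → Term L
  | const : L.Const → Term L

/-- `t.usesVar x` : the variable `x` occurs in the term `t`. -/
def Term.usesVar (x : ℕ) : Term L → Prop
  | .var y => y = x
  | .const _ => False

/-- `t.usesConst c` : the constant `c` occurs in the term `t`. -/
def Term.usesConst (c : L.Const) : Term L → Prop
  | .var _ => False
  | .const d => d = c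

/-- Substitution of the term `t` for the variable `x` in a term. -/
noncomputable def Term.substVar (x : ℕ) (t : Term L) : Term L → Term L
  | .var y => if y = x then t else .var y
  | .const d => .const d

open Classical in
/-- Replacing every occurrence of the constant `c` by the variable `x` in a term. -/
noncomputable def Term.substConst (c : L.Const) (x : ℕ) : Term L → Term L
  | .var y => .var y
  | .const d => if d = c then .var x else .const d

/-- Formulas of the predicate language `L`: the propositional constant `0̄`, atomic
predicate formulas, the connectives `→` and `&`, and the quantifiers `∀` and `∃`. -/
inductive Formula (L : PredLanguage) : Type
  | bot : Formula L
  | pred : (P : L.Pred) → (Fin (L.arity P) → Term L) → Formula L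
  | imp : Formula L → Formula L → Formula L
  | conj : Formula L → Formula L → Formula L
  | all : ℕ → Formula L → Formula L
  | ex : ℕ → Formula L → Formula L

namespace Formula

/-- `1̄ := 0̄ → 0̄`. -/
def one : Formula L := .imp .bot .bot

/-- `φ ∧ ψ := φ & (φ → ψ)`. -/
def and (φ ψ : Formula L) : Formula L := .conj φ (.imp φ ψ)

/-- `φ ∨ ψ := ((φ→ψ)→ψ) ∧ ((ψ→φ)→φ)`. -/
def or (φ ψ : Formula L) : Formula L := and (.imp (.imp φ ψ) ψ) (.imp (.imp ψ φ) φ)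

/-- `φⁿ`, the `n`-fold `&`-power of `φ`, with `φ⁰ = 1̄`. -/
def pow (φ : Formula L) : ℕ → Formula L
  | 0 => one
  | n + 1 => .conj φ (φ.pow n)

/-- `φ.freeIn x` : the variable `x` occurs free in `φ`. -/
def freeIn (x : ℕ) : Formula L → Prop
  | .bot => False
  | .pred _ ts => ∃ i, (ts i).usesVar x
  | .imp φ ψ => φ.freeIn x ∨ ψ.freeIn x
  | .conj φ ψ => φ.freeIn x ∨ ψ.freeIn x
  | .all y φ => y ≠ x ∧ φ.freeIn x
  | .ex y φ => y ≠ x ∧ φ.freeIn x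

/-- `φ.usesConst c` : the constant `c` occurs in `φ`. -/
def usesConst (c : L.Const) : Formula L → Prop
  | .bot => False
  | .pred _ ts => ∃ i, (ts i).usesConst c
  | .imp φ ψ => φ.usesConst c ∨ ψ.usesConst c
  | .conj φ ψ => φ.usesConst c ∨ ψ.usesConst c
  | .all _ φ => φ.usesConst c
  | .ex _ φ => φ.usesConst c

/-- A sentence is a formula with no free variables. -/
def IsSentence (φ : Formula L) : Prop := ∀ x, ¬ φ.freeIn x

/-- `φ.substVar x t` : the result of substituting `t` for the free occurrences of `x` in `φ`. -/
noncomputable def substVar (x : ℕ) (t : Term L) : Formula L → Formula L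
  | .bot => .bot
  | .pred P ts => .pred P fun i => (ts i).substVar x t
  | .imp φ ψ => .imp (φ.substVar x t) (ψ.substVar x t)
  | .conj φ ψ => .conj (φ.substVar x t) (ψ.substVar x t)
  | .all y φ => if y = x then .all y φ else .all y (φ.substVar x t)
  | .ex y φ => if y = x then .ex y φ else .ex y (φ.substVar x t)

/-- `φ.substConst c x` : the result of replacing every occurrence of the constant `c`
by the variable `x` in `φ`. -/
noncomputable def substConst (c : L.Const) (x : ℕ) : Formula L → Formula L
  | .bot => .bot
  | .pred P ts => .pred P fun i => (ts i).substConst c x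
  | .imp φ ψ => .imp (φ.substConst c x) (ψ.substConst c x)
  | .conj φ ψ => .conj (φ.substConst c x) (ψ.substConst c x)
  | .all y φ => .all y (φ.substConst c x)
  | .ex y φ => .ex y (φ.substConst c x)

/-- `Substitutable x t φ` : the term `t` is substitutable for the variable `x` in `φ`
(no free occurrence of `x` lies in the scope of a quantifier binding a variable of `t`). -/
def Substitutable (x : ℕ) (t : Term L) : Formula L → Prop
  | .bot => True
  | .pred _ _ => True
  | .imp φ ψ => Substitutable x t φ ∧ Substitutable x t ψ
  | .conj φ ψ => Substitutable x t φ ∧ Substitutable x t ψ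
  | .all y φ => ¬ (Formula.all y φ).freeIn x ∨ (¬ t.usesVar y ∧ Substitutable x t φ)
  | .ex y φ => ¬ (Formula.ex y φ).freeIn x ∨ (¬ t.usesVar y ∧ Substitutable x t φ)

end Formula

/-- The axiom schemata of the logic: Hájek's (A1)–(A8), the first-order schemata
(∀1), (∃1), (∀2), (∃2), (Lin), and the schema (RC). -/
inductive IsAxiom : Formula L → Prop
  | a1 (φ ψ χ : Formula L) : IsAxiom (.imp (.imp φ ψ) (.imp (.imp ψ χ) (.imp φ χ)))
  | a2 (φ ψ : Formula L) : IsAxiom (.imp (.conj φ ψ) φ)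
  | a3 (φ ψ : Formula L) : IsAxiom (.imp (.conj φ ψ) (.conj ψ φ))
  | a4 (φ ψ : Formula L) : IsAxiom (.imp (.conj φ (.imp φ ψ)) (.conj ψ (.imp ψ φ)))
  | a5 (φ ψ χ : Formula L) : IsAxiom (.imp (.imp φ (.imp ψ χ)) (.imp (.conj φ ψ) χ))
  | a6 (φ ψ χ : Formula L) : IsAxiom (.imp (.imp (.conj φ ψ) χ) (.imp φ (.imp ψ χ)))
  | a7 (φ ψ χ : Formula L) :
      IsAxiom (.imp (.imp (.imp φ ψ) χ) (.imp (.imp (.imp ψ φ) χ) χ))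
  | a8 (φ : Formula L) : IsAxiom (.imp .bot φ)
  | all1 (φ : Formula L) (x : ℕ) (t : Term L) (h : Formula.Substitutable x t φ) :
      IsAxiom (.imp (.all x φ) (φ.substVar x t))
  | ex1 (φ : Formula L) (x : ℕ) (t : Term L) (h : Formula.Substitutable x t φ) :
      IsAxiom (.imp (φ.substVar x t) (.ex x φ))
  | all2 (φ ψ : Formula L) (x : ℕ) (h : ¬ φ.freeIn x) :
      IsAxiom (.imp (.all x (.imp φ ψ)) (.imp φ (.all x ψ)))
  | ex2 (φ ψ : Formula L) (x : ℕ) (h : ¬ φ.freeIn x) :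
      IsAxiom (.imp (.all x (.imp ψ φ)) (.imp (.ex x ψ) φ))
  | lin (φ ψ : Formula L) (x : ℕ) (h : ¬ φ.freeIn x) :
      IsAxiom (.imp (.all x (ψ.or φ)) ((Formula.all x ψ).or φ))
  | rc (χ : Formula L) (x : ℕ) :
      IsAxiom (.imp (.all x (.conj χ χ)) (.conj (.all x χ) (.all x χ)))

/-- `Deriv Γ φ` (written `Γ ⊢ φ`): `φ` has a (possibly infinite, well-founded,
i.e. ordinal-indexed) proof from `Γ` using the axioms, Modus Ponens, Generalization,
and the infinitary rule (Inf) for sentences `φ, α, β`. -/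
inductive Deriv (Γ : Set (Formula L)) : Formula L → Prop
  | ax {φ : Formula L} : IsAxiom φ → Deriv Γ φ
  | hyp {φ : Formula L} : φ ∈ Γ → Deriv Γ φ
  | mp {φ ψ : Formula L} : Deriv Γ φ → Deriv Γ (.imp φ ψ) → Deriv Γ ψ
  | gen {φ : Formula L} {x : ℕ} : Deriv Γ φ → Deriv Γ (.all x φ)
  | inf {φ α β : Formula L} : φ.IsSentence → α.IsSentence → β.IsSentence →
      (∀ n : ℕ, Deriv Γ (φ.or (.imp α (β.pow n)))) →
      Deriv Γ (φ.or (.imp α (.conj α β)))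

/-! ## Semantics over continuous t-norms -/

/-- The residuum of a continuous t-norm: `x → y = max { z : z · x ≤ y }`. -/
noncomputable def ContinuousTNorm.res (B : ContinuousTNorm) (x y : unitInterval) :
    unitInterval := sSup {z | B.mul z x ≤ y}

/-- A structure for `L` based on a continuous t-norm: a nonempty domain, interpretations
of constants in the domain, and `[0,1]`-valued interpretations of predicates. -/
structure TNStructure (L : PredLanguage) (B : ContinuousTNorm) where
  Dom : Type
  dom_nonempty : Nonempty Dom
  constInterp : L.Const → Dom
  predInterp : (P : L.Pred) → (Fin (L.arity P) → Dom) → unitInterval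

variable {B : ContinuousTNorm}

/-- Value of a term under a valuation. -/
def Term.val (M : TNStructure L B) (v : ℕ → M.Dom) : Term L → M.Dom
  | .var x => v x
  | .const c => M.constInterp c

/-- The truth value `‖φ‖^{M,v} ∈ [0,1]`: `&` is interpreted by the t-norm, `→` by its
residuum, `0̄` by `0`, and `∀x`/`∃x` by the infimum/supremum over all valuations agreeing
with `v` except possibly at `x` (these always exist since `[0,1]` is a complete lattice,
so every structure is safe). -/
noncomputable def Formula.val (M : TNStructure L B) :
    Formula L → (ℕ → M.Dom) → unitInterval
  | .bot, _ => 0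
  | .pred P ts, v => M.predInterp P fun i => (ts i).val M v
  | .imp φ ψ, v => B.res (φ.val M v) (ψ.val M v)
  | .conj φ ψ, v => B.mul (φ.val M v) (ψ.val M v)
  | .all x φ, v => ⨅ d : M.Dom, φ.val M (Function.update v x d)
  | .ex x φ, v => ⨆ d : M.Dom, φ.val M (Function.update v x d)

/-- `M` is a model of the set of formulas `Γ`: every formula of `Γ` takes value `1`
under every valuation. -/
def TNStructure.IsModelOf (M : TNStructure L B) (Γ : Set (Formula L)) : Prop :=
  ∀ γ ∈ Γ, ∀ v : ℕ → M.Dom, γ.val M v = 1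

/-- `Γ ⊨ φ`: every (safe) structure based on a continuous t-norm that is a model of `Γ`
is a model of `φ`. -/
def SemConsequence (Γ : Set (Formula L)) (φ : Formula L) : Prop :=
  ∀ (B : ContinuousTNorm) (M : TNStructure L B), M.IsModelOf Γ → M.IsModelOf {φ}

namespace ContinuousTNorm

lemma mul_le_left (x y : unitInterval) : B.mul x y ≤ x :=
  (B.mul_mono x y 1 unitInterval.le_one').trans (B.mul_one x).le

lemma mul_le_right (x y : unitInterval) : B.mul x y ≤ y :=
  B.mul_comm x y ▸ mul_le_left y x

lemma mul_zero (x : unitInterval) : B.mul x 0 = 0 :=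
  le_antisymm (mul_le_right x 0) unitInterval.nonneg'

lemma one_mul (x : unitInterval) : B.mul 1 x = x :=
  B.mul_comm 1 x ▸ B.mul_one x

lemma mul_mono_left (z : unitInterval) {x y : unitInterval} (h : x ≤ y) :
    B.mul x z ≤ B.mul y z := by
  rw [B.mul_comm x, B.mul_comm y]
  exact B.mul_mono z x y h

lemma continuous_mul_left (x : unitInterval) : Continuous fun z => B.mul z x :=
  B.continuous.comp (continuous_id.prodMk continuous_const)

lemma continuous_mul_right (x : unitInterval) : Continuous fun z => B.mul x z :=
  B.continuous.comp (continuous_const.prodMk continuous_id)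

lemma mul_res_le (x y : unitInterval) : B.mul (B.res x y) x ≤ y := by
  have hne : ({z | B.mul z x ≤ y} : Set unitInterval).Nonempty :=
    ⟨0, by rw [Set.mem_ofPred_eq, B.mul_comm, mul_zero]; exact unitInterval.nonneg'⟩
  exact IsClosed.sSup_mem hne (isClosed_Iic.preimage (continuous_mul_left x))

lemma le_res_iff {x y z : unitInterval} : z ≤ B.res x y ↔ B.mul z x ≤ y :=
  ⟨fun h => (mul_mono_left x h).trans (mul_res_le x y), fun h => le_sSup h⟩

lemma res_eq_one_iff {x y : unitInterval} : B.res x y = 1 ↔ x ≤ y :=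
  ⟨fun h => one_mul x ▸ le_res_iff.mp h.ge,
    fun h => le_antisymm unitInterval.le_one' (le_res_iff.mpr ((one_mul x).le.trans h))⟩

lemma one_res (y : unitInterval) : B.res 1 y = y :=
  le_antisymm ((B.mul_one _).ge.trans (mul_res_le 1 y)) (le_res_iff.mpr (B.mul_one y).le)

lemma le_res_res (x y : unitInterval) : x ≤ B.res (B.res x y) y :=
  le_res_iff.mpr (B.mul_comm (B.res x y) x ▸ mul_res_le x y)

lemma res_res_of_le {x y : unitInterval} (h : x ≤ y) : B.res (B.res x y) y = y := by
  rw [res_eq_one_iff.mpr h, one_res]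

lemma min_res_res (x y : unitInterval) :
    min (B.res (B.res x y) y) (B.res (B.res y x) x) = max x y := by
  rcases le_total x y with h | h
  · rw [res_res_of_le h, max_eq_right h]
    exact min_eq_left (le_res_res y x)
  · rw [res_res_of_le h, max_eq_left h]
    exact min_eq_right (le_res_res x y)

lemma exists_mul_eq_of_le {a c : unitInterval} (h : a ≤ c) : ∃ d, B.mul c d = a :=
  intermediate_value_univ 0 1 (continuous_mul_right c)
    ⟨(mul_zero c).trans_le unitInterval.nonneg', h.trans_eq (B.mul_one c).symm⟩

lemma mul_res_eq_min (x y : unitInterval) : B.mul x (B.res x y) = min x y := by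
  rcases le_total x y with h | h
  · rw [res_eq_one_iff.mpr h, B.mul_one, min_eq_left h]
  · obtain ⟨d, hd⟩ := exists_mul_eq_of_le h
    have hd_le : d ≤ B.res x y := le_res_iff.mpr (B.mul_comm d x ▸ hd.le)
    rw [min_eq_right h]
    exact le_antisymm (B.mul_comm x _ ▸ mul_res_le x y) (hd.ge.trans (B.mul_mono x d _ hd_le))

lemma pow_add (b : unitInterval) (m n : ℕ) :
    B.pow b (m + n) = B.mul (B.pow b m) (B.pow b n) := by
  induction m with
  | zero => rw [Nat.zero_add, ContinuousTNorm.pow, one_mul]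
  | succ m ih =>
    rw [Nat.succ_add, ContinuousTNorm.pow, ContinuousTNorm.pow, ih, B.mul_assoc]

lemma antitone_pow (b : unitInterval) : Antitone (B.pow b) :=
  antitone_nat_of_succ_le fun n => mul_le_right b (B.pow b n)

lemma mul_self_iInf_pow (b : unitInterval) :
    B.mul (⨅ n, B.pow b n) (⨅ n, B.pow b n) = ⨅ n, B.pow b n := by
  set c := ⨅ n, B.pow b n
  have hlim : Filter.Tendsto (B.pow b) Filter.atTop (nhds c) :=
    tendsto_atTop_iInf (antitone_pow b)
  have hsq : Filter.Tendsto (fun n => B.mul (B.pow b n) (B.pow b n)) Filter.atTop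
      (nhds (B.mul c c)) :=
    (B.continuous.tendsto (c, c)).comp (hlim.prodMk_nhds hlim)
  have hdouble : Filter.Tendsto (fun n => B.pow b (n + n)) Filter.atTop (nhds c) :=
    hlim.comp (Filter.tendsto_atTop_mono (fun n => Nat.le_add_left n n) Filter.tendsto_id)
  simp only [← pow_add] at hsq
  exact tendsto_nhds_unique hsq hdouble

lemma mul_eq_left_of_le_of_mul_self {a c : unitInterval} (hc : B.mul c c = c) (h : a ≤ c) :
    B.mul a c = a := by
  obtain ⟨d, rfl⟩ := exists_mul_eq_of_le (B := B) h
  rw [B.mul_comm c d, B.mul_assoc, hc]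

lemma le_mul_of_forall_le_pow {a b : unitInterval} (h : ∀ n, a ≤ B.pow b n) :
    a ≤ B.mul a b := by
  have hb : ⨅ n, B.pow b n ≤ b := (iInf_le _ 1).trans_eq (B.mul_one b)
  calc a = B.mul a (⨅ n, B.pow b n) :=
        (mul_eq_left_of_le_of_mul_self (mul_self_iInf_pow b) (le_iInf h)).symm
    _ ≤ B.mul a b := B.mul_mono a _ _ hb

end ContinuousTNorm

namespace Formula

variable (M : TNStructure L B) (v : ℕ → M.Dom)

lemma val_or (φ ψ : Formula L) : (φ.or ψ).val M v = max (φ.val M v) (ψ.val M v) :=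
  (ContinuousTNorm.mul_res_eq_min _ _).trans (ContinuousTNorm.min_res_res _ _)

lemma val_pow (β : Formula L) (n : ℕ) : (β.pow n).val M v = B.pow (β.val M v) n := by
  induction n with
  | zero => exact ContinuousTNorm.res_eq_one_iff.mpr le_rfl
  | succ n ih => exact congrArg (B.mul (β.val M v)) ih

end Formula

open ContinuousTNorm in
/-- soundness of the infinitary rule: for formulas `φ, α, β`,
`{ φ ∨ (α → βⁿ) : n ∈ ℕ } ⊨ φ ∨ (α → (α & β))` over continuous t-norms. -/
theorem infinitary_rule_sound (L : PredLanguage) (φ α β : Formula L) :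
    SemConsequence (Set.range fun n : ℕ => φ.or (.imp α (β.pow n)))
      (φ.or (.imp α (.conj α β))) := by
  rintro B M hM _ rfl v
  rw [Formula.val_or]
  rcases eq_or_ne (φ.val M v) 1 with hφ | hφ
  · rw [hφ]
    exact max_eq_left unitInterval.le_one'
  have hα (n : ℕ) : α.val M v ≤ B.pow (β.val M v) n := by
    have hprem := hM _ ⟨n, rfl⟩ v
    rw [Formula.val_or] at hprem
    have hres := ((max_eq_iff.mp hprem).resolve_left fun h => hφ h.1).1
    rw [← Formula.val_pow]
    exact res_eq_one_iff.mp hres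
  change max _ (B.res _ (B.mul _ _)) = 1
  rw [res_eq_one_iff.mpr (le_mul_of_forall_le_pow hα)]
  exact max_eq_right unitInterval.le_one'
end

section
/- Let H be a totally ordered bounded Wajsberg hoop with least element 0. For all a, b ∈ H: if a·b = a, then a = 0 or b = 1. -/
/-! ## Hoops -/

/-- A hoop: a commutative monoid with an operation `→` (`himp`) satisfying
`x→x = 1`, `x·(x→y) = y·(y→x)` and `x→(y→z) = (x·y)→z`. -/
class Hoop (H : Type*) extends CommMonoid H where
  himp : H → H → H
  himp_self : ∀ x : H, himp x x = 1
  mul_himp_comm : ∀ x y : H, x * himp x y = y * himp y x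
  himp_himp : ∀ x y z : H, himp x (himp y z) = himp (x * y) z

namespace Hoop

variable {H : Type*} [Hoop H]

/-- The hoop order: `x ≤ y` iff `x → y = 1`. -/
def hle (x y : H) : Prop := himp x y = 1

/-- A filter of a hoop: a nonempty subset closed under `·` and upward closed
with respect to the hoop order. -/
def IsFilter (F : Set H) : Prop :=
  F.Nonempty ∧ (∀ x ∈ F, ∀ y ∈ F, x * y ∈ F) ∧ ∀ x ∈ F, ∀ y : H, hle x y → y ∈ F

end Hoop

/-!
Put `x = a → z`. Then `b → x = (b·a) → z = a → z = x`. In a Wajsberg hoop this forces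
`x → b = b`: indeed `(x → b) → b = (b → x) → x = 1`, and `b ≤ x → b` holds in any hoop.
By totality `x ≤ b`, whence `b = x → b = 1`, or `b ≤ x`, whence `x = b → x = 1`,
i.e. `a ≤ z` and so `a = z`.
-/

namespace Hoop

variable {H : Type*} [Hoop H]

theorem hle_antisymm {x y : H} (hxy : hle x y) (hyx : hle y x) : x = y := by
  have h := mul_himp_comm x y
  rwa [show himp x y = 1 from hxy, show himp y x = 1 from hyx, mul_one, mul_one] at h

theorem himp_mul_hle (x y : H) : hle (himp x y * x) y := by
  rw [hle, ← himp_himp, himp_self]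

theorem one_himp (y : H) : himp 1 y = y :=
  hle_antisymm (by simpa only [mul_one] using himp_mul_hle 1 y)
    (by rw [hle, himp_himp, mul_one, himp_self])

theorem himp_one (x : H) : himp x 1 = 1 := by
  have hx : himp x 1 * x = x := by rw [mul_comm, mul_himp_comm, one_himp, one_mul]
  simpa only [hle, hx] using himp_mul_hle x 1

theorem mul_hle_right (x y : H) : hle (x * y) y := by
  rw [hle, ← himp_himp, himp_self, himp_one]

theorem hle_himp (x y : H) : hle y (himp x y) := by
  rw [hle, himp_himp, mul_comm]
  exact mul_hle_right x y

theorem himp_eq_of_himp_eq_of_wajsberg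
    (wajsberg : ∀ x y : H, himp (himp x y) y = himp (himp y x) x)
    {b x : H} (h : himp b x = x) : himp x b = b :=
  hle_antisymm (by rw [hle, wajsberg, h, himp_self]) (hle_himp x b)

theorem eq_one_or_eq_one_of_himp_eq (total : ∀ x y : H, hle x y ∨ hle y x)
    (wajsberg : ∀ x y : H, himp (himp x y) y = himp (himp y x) x)
    {b x : H} (h : himp b x = x) : b = 1 ∨ x = 1 := by
  rcases total x b with hxb | hbx
  · exact Or.inl ((himp_eq_of_himp_eq_of_wajsberg wajsberg h).symm.trans hxb)
  · exact Or.inr (h.symm.trans hbx)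

end Hoop

/-- in a totally ordered bounded Wajsberg hoop with least element `z`,
if `a·b = a` then `a = z` or `b = 1`. -/
theorem bounded_wajsberg_mul_eq (H : Type*) [Hoop H]
    (total : ∀ x y : H, Hoop.hle x y ∨ Hoop.hle y x)
    (wajsberg : ∀ x y : H, Hoop.himp (Hoop.himp x y) y = Hoop.himp (Hoop.himp y x) x)
    (z : H) (hz : ∀ x : H, Hoop.hle z x)
    (a b : H) (h : a * b = a) :
    a = z ∨ b = 1 := by
  have hfix : Hoop.himp b (Hoop.himp a z) = Hoop.himp a z := by
    rw [Hoop.himp_himp, mul_comm, h]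
  rcases Hoop.eq_one_or_eq_one_of_himp_eq total wajsberg hfix with hb | ha
  · exact Or.inr hb
  · exact Or.inl (Hoop.hle_antisymm ha (hz a))
end
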